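/- arXiv:2407.12280 — 2 statements merged into one kernel-verified Lean document; each statement's English description precedes it below -/
import Mathlib

section
/- For nonnegative integers n and indeterminates (rational parameters) a, b, c with the denominators nonzero, the Pfaff–Saalschütz summation holds: ∑_{k=0}^{n} [(-n)_k (a)_k (b)_k] / [(c)_k (1+a+b-c-n)_k k!] = (c-a)_n (c-b)_n / ((c)_n (c-a-b)_n), where (x)_k denotes the rising factorial (Pochhammer symbol). -/
/-!
Multiplying through by `(c)_n (c-a-b)_n`, and using `(-n)_k = (-1)^k n!/(n-k)!` and
`(1+a+b-c-n)_k = (-1)^k (c-a-b+n-k)_k`, turns the sum into the polynomial identity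
`∑ₖ C(n,k) (a)_k (b)_k (c+k)_{n-k} (c-a-b)_{n-k} = (c-a)_n (c-b)_n`, valid in every commutative
ring. Its summands `F n k` (`saalschuetzTerm`) satisfy a weighted Pascal rule: with
`w k = (a+k)(b+k) F n k`, `F (n+1) k - (c-a+n)(c-b+n) F n k = w (k-1) - w k`, so the sum over `k`
telescopes and the identity follows by induction on `n`.
-/

/-- The Pochhammer symbol (rising factorial) `(x)_n = x(x+1)⋯(x+n-1)`. -/
def poch (x : ℚ) (n : ℕ) : ℚ := ∏ i ∈ Finset.range n, (x + i)

open Polynomial Finset Nat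

theorem poch_eq_eval (x : ℚ) (n : ℕ) : poch x n = (ascPochhammer ℚ n).eval x := by
  induction n with
  | zero => simp [poch]
  | succ n ih => rw [poch, prod_range_succ, ← poch, ih, ascPochhammer_succ_eval]

section Pochhammer

variable {R : Type*}

theorem ascPochhammer_succ_eval_left [CommSemiring R] (n : ℕ) (x : R) :
    (ascPochhammer R (n + 1)).eval x = x * (ascPochhammer R n).eval (x + 1) := by
  simp [ascPochhammer_succ_left, eval_comp]

theorem ascPochhammer_eval_add [CommSemiring R] (m n : ℕ) (x : R) :
    (ascPochhammer R (m + n)).eval x =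
      (ascPochhammer R m).eval x * (ascPochhammer R n).eval (x + m) := by
  simp [← ascPochhammer_mul, eval_comp]

theorem ascPochhammer_eval_one_sub_sub [CommRing R] (x : R) (k : ℕ) :
    (ascPochhammer R k).eval (1 - x - k) = (-1) ^ k * (ascPochhammer R k).eval x := by
  have h := ascPochhammer_eval_neg_eq_descPochhammer R (x + k - 1) k
  rwa [descPochhammer_eval_eq_ascPochhammer, show x + k - 1 - k + 1 = x by ring,
    show -(x + k - 1) = 1 - x - k by ring] at h

theorem ascPochhammer_eval_neg_natCast [CommRing R] (n k : ℕ) :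
    (ascPochhammer R k).eval (-(n : R)) = (-1) ^ k * (n.choose k * k ! : R) := by
  rw [ascPochhammer_eval_neg_eq_descPochhammer R, descPochhammer_eval_eq_descFactorial,
    descFactorial_eq_factorial_mul_choose, cast_mul, mul_comm (k ! : R)]

end Pochhammer

section Saalschuetz

variable {R : Type*} [CommRing R] (a b c : R)

noncomputable def saalschuetzTerm (n k : ℕ) : R :=
  n.choose k * (ascPochhammer R k).eval a * (ascPochhammer R k).eval b *
    (ascPochhammer R (n - k)).eval (c + k) * (ascPochhammer R (n - k)).eval (c - a - b)

theorem saalschuetzTerm_succ_zero (n : ℕ) :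
    saalschuetzTerm a b c (n + 1) 0 =
      ((c - a + n) * (c - b + n) - a * b) * saalschuetzTerm a b c n 0 := by
  simp only [saalschuetzTerm, choose_zero_right, Nat.sub_zero, ascPochhammer_succ_eval]
  push_cast
  ring

theorem saalschuetzTerm_succ_succ {n k : ℕ} (hk : k ≤ n) :
    saalschuetzTerm a b c (n + 1) (k + 1) =
      (c - a + n) * (c - b + n) * saalschuetzTerm a b c n (k + 1) +
        (a + k) * (b + k) * saalschuetzTerm a b c n k -
        (a + (k + 1 : ℕ)) * (b + (k + 1 : ℕ)) * saalschuetzTerm a b c n (k + 1) := by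
  obtain rfl | hlt := hk.eq_or_lt
  · simp only [saalschuetzTerm, choose_self, choose_succ_self, Nat.sub_self,
      Nat.sub_eq_zero_of_le (le_succ k), ascPochhammer_zero, eval_one, ascPochhammer_succ_eval,
      cast_zero, cast_one]
    ring
  obtain ⟨m, rfl⟩ := Nat.exists_eq_add_of_lt hlt
  have pascal := (Nat.choose_succ_succ' (k + m + 1) k).symm
  have ratio := Nat.choose_succ_right_eq (k + m + 1) k
  rw [show k + m + 1 - k = m + 1 by omega] at ratio
  simp only [saalschuetzTerm, show k + m + 1 + 1 - (k + 1) = m + 1 by omega,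
    show k + m + 1 - k = m + 1 by omega, show k + m + 1 - (k + 1) = m by omega]
  rw [ascPochhammer_succ_eval_left m (c + k),
    show c + (k : R) + 1 = c + (k + 1 : ℕ) by push_cast; ring]
  simp only [ascPochhammer_succ_eval]
  have pascal' := congrArg (Nat.cast (R := R)) pascal
  have ratio' := congrArg (Nat.cast (R := R)) ratio
  push_cast at pascal' ratio' ⊢
  set X := (ascPochhammer R k).eval a * (ascPochhammer R k).eval b *
    (ascPochhammer R m).eval (c + (k + 1)) * (ascPochhammer R m).eval (c - a - b)
  linear_combination (-(a + k) * (b + k) * X * (c + (k + m + 1)) * (c - a - b + m)) * pascal'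
    - (a + k) * (b + k) * X * (c - a - b + m) * ratio'

theorem sum_saalschuetzTerm_succ (n : ℕ) :
    ∑ k ∈ range (n + 2), saalschuetzTerm a b c (n + 1) k =
      (c - a + n) * (c - b + n) * ∑ k ∈ range (n + 1), saalschuetzTerm a b c n k := by
  set w : ℕ → R := fun k => (a + k) * (b + k) * saalschuetzTerm a b c n k with hw
  have hF_last : saalschuetzTerm a b c n (n + 1) = 0 := by simp [saalschuetzTerm]
  have hF_shift : ∑ k ∈ range (n + 1), saalschuetzTerm a b c n k =
      ∑ k ∈ range (n + 1), saalschuetzTerm a b c n (k + 1) + saalschuetzTerm a b c n 0 := by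
    rw [← sum_range_succ', sum_range_succ _ (n + 1), hF_last, add_zero]
  have hstep : ∀ k ∈ range (n + 1), saalschuetzTerm a b c (n + 1) (k + 1) =
      (c - a + n) * (c - b + n) * saalschuetzTerm a b c n (k + 1) + (w k - w (k + 1)) :=
    fun k hk => by
      rw [saalschuetzTerm_succ_succ a b c (Nat.lt_succ_iff.mp (mem_range.mp hk))]
      ring
  rw [sum_range_succ', sum_congr rfl hstep, sum_add_distrib, sum_range_sub', ← mul_sum,
    saalschuetzTerm_succ_zero, hF_shift]
  simp only [hw, hF_last, Nat.cast_zero, add_zero, mul_zero]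
  ring

theorem sum_saalschuetzTerm (n : ℕ) :
    ∑ k ∈ range (n + 1), saalschuetzTerm a b c n k =
      (ascPochhammer R n).eval (c - a) * (ascPochhammer R n).eval (c - b) := by
  induction n with
  | zero => simp [saalschuetzTerm]
  | succ n ih =>
    rw [sum_saalschuetzTerm_succ, ih, ascPochhammer_succ_eval, ascPochhammer_succ_eval]
    ring

end Saalschuetz

theorem saalschuetz_summand_eq {K : Type*} [Field K] [CharZero K] {a b c : K} {n k : ℕ}
    (hk : k ≤ n) (hc : (ascPochhammer K n).eval c ≠ 0)
    (hcab : (ascPochhammer K n).eval (c - a - b) ≠ 0) :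
    (ascPochhammer K k).eval (-(n : K)) * (ascPochhammer K k).eval a *
        (ascPochhammer K k).eval b /
      ((ascPochhammer K k).eval c * (ascPochhammer K k).eval (1 + a + b - c - n) * (k ! : K)) =
    saalschuetzTerm a b c n k /
      ((ascPochhammer K n).eval c * (ascPochhammer K n).eval (c - a - b)) := by
  obtain ⟨m, rfl⟩ := exists_add_of_le hk
  have hsplit : (ascPochhammer K (k + m)).eval (c - a - b) =
      (ascPochhammer K m).eval (c - a - b) * (ascPochhammer K k).eval (c - a - b + m) := by
    rw [add_comm, ascPochhammer_eval_add]
  have hreflect : (ascPochhammer K k).eval (1 + a + b - c - (k + m : ℕ)) =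
      (-1) ^ k * (ascPochhammer K k).eval (c - a - b + m) := by
    rw [← ascPochhammer_eval_one_sub_sub]
    congr 1
    push_cast
    ring
  rw [ascPochhammer_eval_add] at hc ⊢
  rw [hsplit] at hcab ⊢
  obtain ⟨hc₁, hc₂⟩ := mul_ne_zero_iff.mp hc
  obtain ⟨hcab₁, hcab₂⟩ := mul_ne_zero_iff.mp hcab
  have hfact : (k ! : K) ≠ 0 := Nat.cast_ne_zero.mpr (factorial_ne_zero k)
  rw [hreflect, ascPochhammer_eval_neg_natCast, saalschuetzTerm, Nat.add_sub_cancel_left]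
  field_simp

theorem ascPochhammer_pfaff_saalschuetz {K : Type*} [Field K] [CharZero K] (n : ℕ) (a b c : K)
    (hc : (ascPochhammer K n).eval c ≠ 0)
    (hd : (ascPochhammer K n).eval (1 + a + b - c - n) ≠ 0) :
    ∑ k ∈ range (n + 1),
      (ascPochhammer K k).eval (-(n : K)) * (ascPochhammer K k).eval a *
          (ascPochhammer K k).eval b /
        ((ascPochhammer K k).eval c * (ascPochhammer K k).eval (1 + a + b - c - n) * (k ! : K)) =
    (ascPochhammer K n).eval (c - a) * (ascPochhammer K n).eval (c - b) /
      ((ascPochhammer K n).eval c * (ascPochhammer K n).eval (c - a - b)) := by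
  have hcab : (ascPochhammer K n).eval (c - a - b) ≠ 0 := by
    rw [show 1 + a + b - c - n = 1 - (c - a - b) - n by ring, ascPochhammer_eval_one_sub_sub] at hd
    exact right_ne_zero_of_mul hd
  rw [sum_congr rfl fun k hk =>
      saalschuetz_summand_eq (Nat.lt_succ_iff.mp (mem_range.mp hk)) hc hcab,
    ← sum_div, sum_saalschuetzTerm]


theorem pfaff_saalschuetz_general (n : ℕ) (a b c : ℚ)
    (hc : ∀ k ≤ n, poch c k ≠ 0)
    (hd : ∀ k ≤ n, poch (1 + a + b - c - (n : ℚ)) k ≠ 0) :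
    ∑ k ∈ Finset.range (n + 1),
      (poch (-(n : ℚ)) k * poch a k * poch b k) /
        (poch c k * poch (1 + a + b - c - (n : ℚ)) k * (Nat.factorial k : ℚ))
    = (poch (c - a) n * poch (c - b) n) / (poch c n * poch (c - a - b) n) := by
  simp only [poch_eq_eval] at hc hd ⊢
  exact ascPochhammer_pfaff_saalschuetz n a b c (hc n le_rfl) (hd n le_rfl)

/-- The Pfaff–Saalschütz summation formula. -/
theorem pfaff_saalschuetz (n : ℕ) (a b c : ℚ)
    (hc : ∀ k ≤ n, poch c k ≠ 0)
    (hd : ∀ k ≤ n, poch (1 + a + b - c - (n : ℚ)) k ≠ 0)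
    (hcab : poch (c - a - b) n ≠ 0) :
    ∑ k ∈ Finset.range (n + 1),
      (poch (-(n : ℚ)) k * poch a k * poch b k) /
        (poch c k * poch (1 + a + b - c - (n : ℚ)) k * (Nat.factorial k : ℚ))
    = (poch (c - a) n * poch (c - b) n) / (poch c n * poch (c - a - b) n) :=
  pfaff_saalschuetz_general n a b c hc hd
end

section
/- For real (or rational) ℓ, natural numbers b and n, the b-fold composition D_{ℓ+1-2b} ∘ ⋯ ∘ D_{ℓ-3} ∘ D_{ℓ-1} applied to ρ^n equals ρ^{n-b} · (b!)² · C(n, b) · C(ℓ-n, b), where D_j(f) = -ρ f'' + j f' and C(x, k) is the generalized binomial coefficient. -/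
open Polynomial

/-- The generalized binomial coefficient `C(x, k) = x(x-1)⋯(x-k+1)/k!`. -/
def gbinom (x : ℚ) (k : ℕ) : ℚ := (∏ i ∈ Finset.range k, (x - i)) / (Nat.factorial k : ℚ)

/-- The operator `D_j(f) = -ρ f'' + j f'` on polynomials in `ρ`. -/
noncomputable def Dop (j : ℚ) (f : ℚ[X]) : ℚ[X] :=
  -(X * derivative (derivative f)) + C j * derivative f

/-- The `b`-fold composition `D_{ℓ+1-2b} ∘ ⋯ ∘ D_{ℓ-3} ∘ D_{ℓ-1}` (applying `D_{ℓ-1}` first). -/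
noncomputable def compD (ℓ : ℚ) : ℕ → ℚ[X] → ℚ[X]
  | 0, p => p
  | (b + 1), p => Dop (ℓ - 1 - 2 * b) (compD ℓ b p)

lemma deriv_CX (a : ℚ) (m : ℕ) :
    derivative (C a * X ^ (m + 1)) = C (a * ((m : ℚ) + 1)) * X ^ m := by
  rw [derivative_C_mul, derivative_X_pow, Nat.add_sub_cancel, C_mul]
  push_cast
  ring

lemma Dop_C_mul_X_pow (j c : ℚ) (m : ℕ) :
    Dop j (C c * X ^ (m + 1)) = C (c * (m + 1) * (j - m)) * X ^ m := by
  cases m with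
  | zero =>
    simp only [Dop, deriv_CX, zero_add, pow_zero, mul_one, derivative_C,
      mul_zero, neg_zero, zero_add, Nat.cast_zero, sub_zero]
    rw [← C_mul, C_inj]
    ring
  | succ k =>
    simp only [Dop, deriv_CX]
    set A := c * (((k + 1 : ℕ) : ℚ) + 1) * ((k : ℚ) + 1) with hA
    set B := c * (((k + 1 : ℕ) : ℚ) + 1) with hB
    have e1 : -(X * (C A * X ^ k)) = C (-A) * X ^ (k + 1) := by
      rw [map_neg]; ring
    rw [e1, ← mul_assoc, ← C_mul, ← add_mul, ← C_add]
    congr 1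
    rw [C_inj, hA, hB]
    push_cast
    ring

lemma compD_eq (ℓ : ℚ) (n b : ℕ) :
    compD ℓ b (X ^ n)
      = C (∏ i ∈ Finset.range b, (((n : ℚ) - i) * (ℓ - n - i))) * X ^ (n - b) := by
  induction b with
  | zero => simp [compD]
  | succ b ih =>
    rw [compD, ih]
    rcases le_or_gt n b with h | h
    · have h1 : n - b = 0 := by omega
      have h2 : (∏ i ∈ Finset.range (b + 1), (((n : ℚ) - i) * (ℓ - n - i))) = 0 := by
        apply Finset.prod_eq_zero (Finset.mem_range.2 (by omega : n < b + 1))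
        simp
      rw [h1, h2]
      generalize (∏ i ∈ Finset.range b, (((n : ℚ) - i) * (ℓ - n - i))) = c
      simp [Dop]
    · have h1 : n - b = (n - (b + 1)) + 1 := by omega
      rw [h1, Dop_C_mul_X_pow]
      congr 1
      rw [C_inj]
      rw [Finset.prod_range_succ]
      have h2 : ((n - (b + 1) : ℕ) : ℚ) = (n : ℚ) - b - 1 := by
        push_cast [Nat.cast_sub (by omega : b + 1 ≤ n)]; ring
      rw [h2]
      ring

lemma coef_eq (x y : ℚ) (b : ℕ) :
    ((Nat.factorial b : ℚ))^2 * gbinom x b * gbinom y b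
      = ∏ i ∈ Finset.range b, ((x - i) * (y - i)) := by
  have hb : (Nat.factorial b : ℚ) ≠ 0 := by positivity
  rw [Finset.prod_mul_distrib]
  simp only [gbinom]
  field_simp

/-- `D_{ℓ+1-2b} ⋯ D_{ℓ-3} D_{ℓ-1} (ρ^n) = ρ^{n-b} (b!)² C(n,b) C(ℓ-n,b)`, stated after
multiplying both sides by `ρ^b` so that no negative powers occur. -/
theorem compD_X_pow (ℓ : ℚ) (b n : ℕ) :
    X ^ b * compD ℓ b (X ^ n)
      = C (((Nat.factorial b : ℚ))^2 * gbinom (n : ℚ) b * gbinom (ℓ - n) b) * X ^ n := by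
  rw [compD_eq, coef_eq]
  rcases le_or_gt b n with h | h
  · calc X ^ b * (C (∏ i ∈ Finset.range b, (((n : ℚ) - i) * (ℓ - n - i))) * X ^ (n - b))
        = C (∏ i ∈ Finset.range b, (((n : ℚ) - i) * (ℓ - n - i))) * (X ^ b * X ^ (n - b)) := by
          ring
      _ = _ := by rw [← pow_add, Nat.add_sub_cancel' h]
  · have h2 : (∏ i ∈ Finset.range b, (((n : ℚ) - i) * (ℓ - n - i))) = 0 := by
      apply Finset.prod_eq_zero (Finset.mem_range.2 h)
      simp
    rw [h2]
    simp
end
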